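/- For every cluster order π and every position 1 ≤ i ≤ k, the part incoming weight satisfies w_i(π) ≥ (d_I + d_C + 1 − i)·β_C, with equality when π_i = 0. In particular, for a cluster position i (π_i ≥ 1) one has a_i(π)·β_I + b_i(π)·β_C ≥ (d + 1 − i)·β_C. -/

import Mathlib

/-- Relative location `h_π(i) = #{1 ≤ j ≤ i : π j = π i}`. -/
def relLoc (π : ℕ → ℕ) (i : ℕ) : ℕ :=
  ((Finset.Icc 1 i).filter (fun j => π j = π i)).card

/-- Intra-cluster coefficient `a_i(π) = d_I + 1 − h_π(i)` (truncated subtraction). -/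
def aCoef (dI : ℕ) (π : ℕ → ℕ) (i : ℕ) : ℕ :=
  dI + 1 - relLoc π i

/-- Cross-cluster coefficient `b_i(π) = max(0, d_C − (i − h_π(i)))` (truncated subtraction). -/
def bCoef (dC : ℕ) (π : ℕ → ℕ) (i : ℕ) : ℕ :=
  dC - (i - relLoc π i)

/-- Part incoming weight `w_i(π)`: for a separate position (`π i = 0`) it is
`(d_I + d_C + 1 − i)·β_C`, otherwise `a_i(π)·β_I + b_i(π)·β_C`. -/
noncomputable def weight (dI dC : ℕ) (βI βC : ℝ) (π : ℕ → ℕ) (i : ℕ) : ℝ :=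
  if π i = 0 then ((dI + dC + 1 - i : ℕ) : ℝ) * βC
  else (aCoef dI π i : ℝ) * βI + (bCoef dC π i : ℝ) * βC

/-- Min-cut `MC(π) = Σ_{i=1}^k min(α, w_i(π))`. -/
noncomputable def MC (k dI dC : ℕ) (βI βC α : ℝ) (π : ℕ → ℕ) : ℝ :=
  ∑ i ∈ Finset.Icc 1 k, min α (weight dI dC βI βC π i)

/-- A cluster order: a `k`-tuple with entries in `{0, 1, …, L}`. -/
def IsClusterOrder (L k : ℕ) (π : ℕ → ℕ) : Prop :=
  ∀ i, 1 ≤ i → i ≤ k → π i ≤ L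

/-- A selected node distribution `(s_0, s_1, …, s_L)`:
`R ≥ s_1 ≥ s_2 ≥ … ≥ s_L` and `s_0 + s_1 + … + s_L = k`. -/
def IsDist (L R k : ℕ) (s : ℕ → ℕ) : Prop :=
  (∀ i, 1 ≤ i → i + 1 ≤ L → s (i + 1) ≤ s i) ∧
  (∀ i, 1 ≤ i → i ≤ L → s i ≤ R) ∧
  ∑ i ∈ Finset.range (L + 1), s i = k

/-- `π ∈ Π(s)`: `π` is a cluster order with `#{1 ≤ j ≤ k : π j = c} = s c` for all `0 ≤ c ≤ L`. -/
def MemPi (L k : ℕ) (s : ℕ → ℕ) (π : ℕ → ℕ) : Prop :=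
  IsClusterOrder L k π ∧
  ∀ c, c ≤ L → ((Finset.Icc 1 k).filter (fun j => π j = c)).card = s c

/-- Vertical order of distribution `s` (possibly with separate entries, whose positions are
not constrained here):  over the cluster positions (`π i ≠ 0`) in increasing order, relative
locations are nondecreasing, with ties broken by increasing cluster index. -/
def IsVerticalOrder (L k : ℕ) (s : ℕ → ℕ) (π : ℕ → ℕ) : Prop :=
  MemPi L k s π ∧
  ∀ i j, 1 ≤ i → i < j → j ≤ k → π i ≠ 0 → π j ≠ 0 →
    relLoc π i ≤ relLoc π j ∧ (relLoc π i = relLoc π j → π i < π j)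

/-- The distribution `s*` (no separate node): `s*_0 = 0`, `s*_i = R` for `1 ≤ i ≤ ⌊k/R⌋`,
`s*_{⌊k/R⌋+1} = k − ⌊k/R⌋·R`, and `0` beyond. -/
def sStar0 (R k : ℕ) : ℕ → ℕ := fun i =>
  if i = 0 then 0
  else if i ≤ k / R then R
  else if i = k / R + 1 then k - k / R * R
  else 0

/-- The distribution with one separate node: `s_0 = 1`, `s_i = R` for `1 ≤ i ≤ ⌊(k−1)/R⌋`,
`s_{⌊(k−1)/R⌋+1} = (k−1) − ⌊(k−1)/R⌋·R`, and `0` beyond. -/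
def sStar1 (R k : ℕ) : ℕ → ℕ := fun i =>
  if i = 0 then 1
  else if i ≤ (k - 1) / R then R
  else if i = (k - 1) / R + 1 then (k - 1) - (k - 1) / R * R
  else 0

/-- `π^(j)`: the cluster order with exactly one separate entry, located at position `j`,
whose cluster entries form the vertical order of the distribution `sStar1 R k`. -/
def IsPiJ (L R k j : ℕ) (π : ℕ → ℕ) : Prop :=
  π j = 0 ∧ IsVerticalOrder L k (sStar1 R k) π

theorem relLoc_le (π : ℕ → ℕ) (i : ℕ) : relLoc π i ≤ i := by
  simpa [relLoc] using Finset.card_filter_le (Finset.Icc 1 i) (fun j => π j = π i)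

/-- Since `relLoc π i ≤ i`, the truncated subtractions in `aCoef` and `bCoef` can only increase
the integer sum `(d_I + 1 - h) + (d_C - (i - h)) = d_I + d_C + 1 - i`, `h = relLoc π i`. -/
theorem sub_le_aCoef_add_bCoef (dI dC : ℕ) (π : ℕ → ℕ) (i : ℕ) :
    dI + dC + 1 - i ≤ aCoef dI π i + bCoef dC π i := by
  have := relLoc_le π i
  unfold aCoef bCoef
  omega

theorem weight_of_eq_zero {dI dC : ℕ} {βI βC : ℝ} {π : ℕ → ℕ} {i : ℕ} (h : π i = 0) :
    weight dI dC βI βC π i = ((dI + dC + 1 - i : ℕ) : ℝ) * βC := by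
  simp [weight, h]

theorem weight_of_ne_zero {dI dC : ℕ} {βI βC : ℝ} {π : ℕ → ℕ} {i : ℕ} (h : π i ≠ 0) :
    weight dI dC βI βC π i = (aCoef dI π i : ℝ) * βI + (bCoef dC π i : ℝ) * βC := by
  simp [weight, h]

theorem sub_mul_le_weight (dI dC : ℕ) {βI βC : ℝ} (hβ : βC ≤ βI) (hβC : 0 ≤ βC)
    (π : ℕ → ℕ) (i : ℕ) :
    ((dI + dC + 1 - i : ℕ) : ℝ) * βC ≤ weight dI dC βI βC π i := by
  by_cases h : π i = 0
  · exact (weight_of_eq_zero h).ge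
  rw [weight_of_ne_zero h]
  calc ((dI + dC + 1 - i : ℕ) : ℝ) * βC
      ≤ ((aCoef dI π i + bCoef dC π i : ℕ) : ℝ) * βC := by
        gcongr
        exact sub_le_aCoef_add_bCoef dI dC π i
    _ = (aCoef dI π i : ℝ) * βC + (bCoef dC π i : ℝ) * βC := by push_cast; ring
    _ ≤ (aCoef dI π i : ℝ) * βI + (bCoef dC π i : ℝ) * βC := by gcongr

theorem stmt8_general (k dI dC : ℕ) (βI βC : ℝ)
    (hβ : βC ≤ βI) (hβC : 0 < βC)
    (π : ℕ → ℕ) :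
    ∀ i, 1 ≤ i → i ≤ k →
      ((dI + dC + 1 - i : ℕ) : ℝ) * βC ≤ weight dI dC βI βC π i ∧
      (π i = 0 → weight dI dC βI βC π i = ((dI + dC + 1 - i : ℕ) : ℝ) * βC) :=
  fun i _ _ => ⟨sub_mul_le_weight dI dC hβ hβC.le π i, weight_of_eq_zero⟩

/-- for every cluster order `π` and position `1 ≤ i ≤ k`,
`w_i(π) ≥ (d_I + d_C + 1 − i)·β_C`, with equality when `π i = 0`. -/
theorem stmt8 (L R k dI dC : ℕ) (βI βC : ℝ)
    (hL : 1 ≤ L) (hR : 2 ≤ R) (hk : 2 ≤ k)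
    (hdI : dI = R - 1) (hdC : 1 ≤ dC) (hkd : k ≤ dI + dC)
    (hβ : βC ≤ βI) (hβC : 0 < βC)
    (π : ℕ → ℕ) (hπ : IsClusterOrder L k π) :
    ∀ i, 1 ≤ i → i ≤ k →
      ((dI + dC + 1 - i : ℕ) : ℝ) * βC ≤ weight dI dC βI βC π i ∧
      (π i = 0 → weight dI dC βI βC π i = ((dI + dC + 1 - i : ℕ) : ℝ) * βC) :=
  stmt8_general k dI dC βI βC hβ hβC π
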